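/- arXiv:1807.03744 — 5 statements merged into one kernel-verified Lean document; each statement's English description precedes it below -/
import Mathlib

section
/- For every δ ∈ (0, 1/3) and every integer n ≥ 2, one has p_δ(n) ≤ 2·e^{2δ}·(1 + (n+2)δ) / ((n+1)(n+2)·e^{δn}·n^{δ}). -/
open scoped BigOperators
open Filter Set

/-- `P δ n = ℙ(τ ≥ n)` for the perturbed 1-d senile reinforced random walk
(`P δ 1 = 1` since the product is empty). -/
noncomputable def P (δ : ℝ) (n : ℕ) : ℝ :=
  ∏ k ∈ Finset.Icc 2 n, ((k : ℝ) / ((k : ℝ) + 1) - δ)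

/-- `p δ n = ℙ(τ = n)`. -/
noncomputable def p (δ : ℝ) (n : ℕ) : ℝ :=
  P δ n * (1 / ((n : ℝ) + 2) + δ)

lemma telescope (n : ℕ) (hn : 2 ≤ n) :
    ∏ k ∈ Finset.Icc 2 n, ((k : ℝ) / ((k : ℝ) + 1)) = 2 / ((n : ℝ) + 1) := by
  induction n, hn using Nat.le_induction with
  | base => norm_num
  | succ n hn ih =>
    rw [Finset.prod_Icc_succ_top (by omega), ih]
    have h1 : (n : ℝ) + 1 ≠ 0 := by positivity
    have h2 : (n : ℝ) + 2 ≠ 0 := by positivity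
    push_cast
    field_simp
    try ring

lemma sum_inv_ge (n : ℕ) (hn : 2 ≤ n) :
    Real.log ((n : ℝ) + 1) - Real.log 2 ≤ ∑ k ∈ Finset.Icc 2 n, 1 / (k : ℝ) := by
  induction n, hn using Nat.le_induction with
  | base =>
    have h := Real.log_le_sub_one_of_pos (x := (3 : ℝ) / 2) (by norm_num)
    rw [Real.log_div (by norm_num) (by norm_num)] at h
    norm_num at h ⊢
    linarith
  | succ n hn ih =>
    rw [Finset.sum_Icc_succ_top (by omega)]
    have hpos : (0 : ℝ) < (n : ℝ) + 1 := by positivity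
    have h := Real.log_le_sub_one_of_pos (x := ((n : ℝ) + 2) / ((n : ℝ) + 1))
      (by positivity)
    rw [Real.log_div (by positivity) (by positivity)] at h
    have heq : ((n : ℝ) + 2) / ((n : ℝ) + 1) - 1 = 1 / ((n : ℝ) + 1) := by
      field_simp
      norm_num
    rw [heq] at h
    push_cast
    rw [show ((n : ℝ) + 1 + 1) = (n : ℝ) + 2 by ring]
    linarith

/-- for every `δ ∈ (0, 1/3)` and integer `n ≥ 2`,
`p_δ(n) ≤ 2 e^{2δ} (1 + (n+2)δ) / ((n+1)(n+2) e^{δn} n^δ)`. -/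
theorem p_upper_bound (δ : ℝ) (hδ : δ ∈ Set.Ioo (0 : ℝ) (1/3)) (n : ℕ) (hn : 2 ≤ n) :
    p δ n ≤ 2 * Real.exp (2 * δ) * (1 + ((n : ℝ) + 2) * δ) /
      (((n : ℝ) + 1) * ((n : ℝ) + 2) * Real.exp (δ * n) * (n : ℝ) ^ δ) := by
  obtain ⟨hδ0, hδ3⟩ := hδ
  have hn0 : (0 : ℝ) < n := by positivity
  have hnR : (2 : ℝ) ≤ (n : ℝ) := by exact_mod_cast hn
  -- Step 1: factorwise bound
  have hstep : P δ n ≤ (2 / ((n : ℝ) + 1)) *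
      Real.exp (∑ k ∈ Finset.Icc 2 n, -(δ * (1 + 1 / (k : ℝ)))) := by
    have hprod : P δ n ≤ ∏ k ∈ Finset.Icc 2 n,
        ((k : ℝ) / ((k : ℝ) + 1) * Real.exp (-(δ * (1 + 1 / (k : ℝ))))) := by
      apply Finset.prod_le_prod
      · intro k hk
        simp only [Finset.mem_Icc] at hk
        have hk2 : (2 : ℝ) ≤ (k : ℝ) := by exact_mod_cast hk.1
        have h1 : (2 : ℝ) / 3 ≤ (k : ℝ) / ((k : ℝ) + 1) := by
          rw [div_le_div_iff₀ (by norm_num) (by positivity)]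
          linarith
        linarith
      · intro k hk
        simp only [Finset.mem_Icc] at hk
        have hk2 : (2 : ℝ) ≤ (k : ℝ) := by exact_mod_cast hk.1
        have hkpos : (0 : ℝ) < (k : ℝ) := by linarith
        have hfac : (k : ℝ) / ((k : ℝ) + 1) - δ =
            (k : ℝ) / ((k : ℝ) + 1) * (1 - δ * (1 + 1 / (k : ℝ)))  := by
          field_simp
        rw [hfac]
        apply mul_le_mul_of_nonneg_left _ (by positivity)
        have := Real.add_one_le_exp (-(δ * (1 + 1 / (k : ℝ))))
        linarith
    rw [Finset.prod_mul_distrib, ← Real.exp_sum, telescope n hn] at hprod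
    exact hprod
  -- Step 2: bound the sum
  have hsum : -(∑ k ∈ Finset.Icc 2 n, (δ * (1 + 1 / (k : ℝ)))) ≤
      -(δ * ((n : ℝ) - 2 + Real.log n)) := by
    have hcard : ∑ k ∈ Finset.Icc 2 n, (1 : ℝ) = (n : ℝ) - 1 := by
      rw [Finset.sum_const, Nat.card_Icc, nsmul_eq_mul, mul_one]
      have h1 : (1 : ℕ) ≤ n := by omega
      have h2 : n + 1 - 2 = n - 1 := by omega
      rw [h2, Nat.cast_sub h1, Nat.cast_one]
    have hinv := sum_inv_ge n hn
    have hlog2 : Real.log 2 ≤ 1 := by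
      have := Real.log_le_sub_one_of_pos (x := (2 : ℝ)) (by norm_num)
      linarith
    have hloglog : Real.log n ≤ Real.log ((n : ℝ) + 1) :=
      Real.log_le_log (by positivity) (by linarith)
    have hS : (n : ℝ) - 2 + Real.log n ≤ ∑ k ∈ Finset.Icc 2 n, (1 + 1 / (k : ℝ)) := by
      rw [Finset.sum_add_distrib, hcard]
      linarith
    have : δ * ((n : ℝ) - 2 + Real.log n) ≤
        δ * ∑ k ∈ Finset.Icc 2 n, (1 + 1 / (k : ℝ)) :=
      mul_le_mul_of_nonneg_left hS (le_of_lt hδ0)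
    rw [Finset.mul_sum] at this
    linarith
  -- combine
  have hP : P δ n ≤ (2 / ((n : ℝ) + 1)) *
      (Real.exp (2 * δ) / (Real.exp (δ * n) * (n : ℝ) ^ δ)) := by
    refine hstep.trans ?_
    have h1 : ∑ k ∈ Finset.Icc 2 n, -(δ * (1 + 1 / (k : ℝ))) =
        -(∑ k ∈ Finset.Icc 2 n, (δ * (1 + 1 / (k : ℝ)))) := by
      rw [Finset.sum_neg_distrib]
    rw [h1]
    apply mul_le_mul_of_nonneg_left _ (by positivity)
    have hexp := Real.exp_le_exp.mpr hsum
    refine hexp.trans ?_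
    have hrpow : ((n : ℝ)) ^ δ = Real.exp (Real.log n * δ) :=
      Real.rpow_def_of_pos hn0 δ
    have heq : Real.exp (-(δ * ((n : ℝ) - 2 + Real.log n))) =
        Real.exp (2 * δ) / (Real.exp (δ * n) * (n : ℝ) ^ δ) := by
      rw [hrpow, ← Real.exp_add, ← Real.exp_sub]
      congr 1
      ring
    rw [← heq]
  -- Step 3: multiply by (1/(n+2)+δ)
  have hfacpos : (0 : ℝ) < 1 / ((n : ℝ) + 2) + δ := by positivity
  have hmul := mul_le_mul_of_nonneg_right hP (le_of_lt hfacpos)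
  rw [show p δ n = P δ n * (1 / ((n : ℝ) + 2) + δ) from rfl] at *
  refine hmul.trans (le_of_eq ?_)
  have h1 : (0 : ℝ) < (n : ℝ) + 1 := by positivity
  have h2 : (0 : ℝ) < (n : ℝ) + 2 := by positivity
  have h3 : (0 : ℝ) < Real.exp (δ * n) := Real.exp_pos _
  have h4 : (0 : ℝ) < (n : ℝ) ^ δ := Real.rpow_pos_of_pos hn0 δ
  field_simp
end

section
/- The expected first-edge occupation time diverges as the perturbation vanishes: E(δ) := ∑_{n=1}^∞ P_δ(n) tends to +∞ as δ → 0⁺. -/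
open scoped BigOperators
open Filter Set

/-!
At `δ = 0` the product telescopes to `P 0 (n + 1) = 2 / (n + 2)`, whose series diverges like the
harmonic series. For `δ > 0` the series converges, and each of its partial sums is a polynomial
in `δ`, hence close to the corresponding (arbitrarily large) partial sum at `δ = 0`; since the
terms are nonnegative, the full sum dominates every partial sum.
-/

open Finset

theorem tendsto_tsum_atTop_of_tendsto_sum_range {X : Type*} [TopologicalSpace X]
    {f : ℕ → X → ℝ} {a : X} {l : Filter X} (hl : l ≤ nhds a) (hf : ∀ n, ContinuousAt (f n) a)
    (hnonneg : ∀ᶠ x in l, ∀ n, 0 ≤ f n x) (hsum : ∀ᶠ x in l, Summable fun n => f n x)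
    (hdiv : Tendsto (fun N => ∑ n ∈ range N, f n a) atTop atTop) :
    Tendsto (fun x => ∑' n, f n x) l atTop := by
  refine tendsto_atTop.2 fun C => ?_
  obtain ⟨N, hN⟩ := (hdiv.eventually_gt_atTop C).exists
  have hpartial : ∀ᶠ x in l, C < ∑ n ∈ range N, f n x :=
    (tendsto_finsetSum _ fun n _ => (hf n).mono_left hl).eventually_const_lt hN
  filter_upwards [hpartial, hnonneg, hsum] with x hC h0 hs
  exact hC.le.trans (hs.sum_le_tsum _ fun n _ => h0 n)

theorem continuous_P (n : ℕ) : Continuous fun δ => P δ n := by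
  unfold P
  fun_prop

theorem P_succ {n : ℕ} (hn : 1 ≤ n) (δ : ℝ) :
    P δ (n + 1) = P δ n * (((n : ℝ) + 1) / ((n : ℝ) + 2) - δ) := by
  rw [P, P, prod_Icc_succ_top (by omega)]
  push_cast
  ring

theorem P_zero_succ (n : ℕ) : P 0 (n + 1) = 2 / ((n : ℝ) + 2) := by
  induction n with
  | zero => simp [P]
  | succ n ih =>
    rw [P_succ (by omega), ih]
    push_cast
    field_simp
    ring

theorem natCast_div_add_one_sub_nonneg {δ : ℝ} (hδ : δ ≤ 2 / 3) {k : ℕ} (hk : 2 ≤ k) :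
    0 ≤ (k : ℝ) / ((k : ℝ) + 1) - δ := by
  have hk' : (2 : ℝ) ≤ k := by exact_mod_cast hk
  have : (2 : ℝ) / 3 ≤ k / (k + 1) := by
    rw [div_le_div_iff₀ (by norm_num) (by linarith)]
    linarith
  linarith

theorem P_nonneg {δ : ℝ} (hδ : δ ≤ 2 / 3) (n : ℕ) : 0 ≤ P δ n :=
  prod_nonneg fun _ hk => natCast_div_add_one_sub_nonneg hδ (Finset.mem_Icc.1 hk).1

theorem P_succ_le_pow {δ : ℝ} (hδ : δ ≤ 2 / 3) (n : ℕ) : P δ (n + 1) ≤ (1 - δ) ^ n := by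
  have hle : ∀ k ∈ Finset.Icc 2 (n + 1), (k : ℝ) / (k + 1) - δ ≤ 1 - δ := fun k _ => by
    have : (k : ℝ) / (k + 1) ≤ 1 := div_le_one_of_le₀ (by linarith) (by positivity)
    linarith
  calc P δ (n + 1) ≤ ∏ _k ∈ Finset.Icc 2 (n + 1), (1 - δ) :=
        prod_le_prod (fun k hk => natCast_div_add_one_sub_nonneg hδ (Finset.mem_Icc.1 hk).1) hle
    _ = (1 - δ) ^ n := by simp

theorem summable_P {δ : ℝ} (hδ₀ : 0 < δ) (hδ : δ ≤ 2 / 3) : Summable fun n => P δ (n + 1) :=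
  (summable_geometric_of_lt_one (by linarith) (by linarith)).of_nonneg_of_le
    (fun n => P_nonneg hδ _) (P_succ_le_pow hδ)

theorem tendsto_sum_range_P_zero :
    Tendsto (fun N => ∑ n ∈ range N, P 0 (n + 1)) atTop atTop := by
  refine tendsto_atTop_mono (fun N => sum_le_sum fun n _ => ?_)
    Real.tendsto_sum_range_one_div_nat_succ_atTop
  rw [P_zero_succ, div_le_div_iff₀ (by positivity) (by positivity)]
  linarith

/-- `E(δ) = ∑_{n=1}^∞ P_δ(n) = 𝔼[τ]` tends to `+∞` as `δ → 0⁺`. -/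
theorem expectation_tau_tendsto_atTop :
    Tendsto (fun δ : ℝ => ∑' n : ℕ, P δ (n + 1)) (nhdsWithin 0 (Set.Ioi 0)) atTop := by
  have hsmall : ∀ᶠ δ in nhdsWithin 0 (Ioi 0), δ ∈ Ioo (0 : ℝ) (2 / 3) :=
    Ioo_mem_nhdsGT (by norm_num)
  exact tendsto_tsum_atTop_of_tendsto_sum_range nhdsWithin_le_nhds
    (fun n => (continuous_P _).continuousAt)
    (hsmall.mono fun δ hδ n => P_nonneg hδ.2.le _)
    (hsmall.mono fun δ hδ => summable_P hδ.1 hδ.2.le) tendsto_sum_range_P_zero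
end

section
/- The diffusion constant of the deterministically perturbed one-dimensional senile reinforced random walk is of order 1/|log δ|: there exist constants 0 < c ≤ C and δ₀ ∈ (0, 1/3) such that for all δ ∈ (0, δ₀), c/log(1/δ) ≤ ν(δ) ≤ C/log(1/δ), where ν(δ) := (∑_{n odd} p_δ(n)) / ((∑_{n even} p_δ(n)) · ∑_{n=1}^∞ P_δ(n)). -/
open scoped BigOperators
open Filter Set

/-- The diffusion constant `ν(δ) = ℙ(τ odd)/(ℙ(τ even)·𝔼[τ])` of Holmes–Sakai's
formula, for the deterministically perturbed model. -/
noncomputable def ν (δ : ℝ) : ℝ :=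
  (∑' n : ℕ, p δ (2 * n + 1)) /
    ((∑' n : ℕ, p δ (2 * n + 2)) * ∑' n : ℕ, P δ (n + 1))

namespace SRRW

variable {δ : ℝ}

lemma P_pos (h0 : 0 < δ) (h3 : δ < 1/3) (n : ℕ) : 0 < P δ n := by
  apply Finset.prod_pos
  intro k hk
  have hk2 : (2:ℕ) ≤ k := (Finset.mem_Icc.mp hk).1
  have hk2' : (2:ℝ) ≤ (k:ℝ) := by exact_mod_cast hk2
  have hpos : (0:ℝ) < (k:ℝ) + 1 := by linarith
  have : (2:ℝ)/3 ≤ (k:ℝ)/((k:ℝ)+1) := by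
    rw [div_le_div_iff₀ (by norm_num) hpos]; linarith
  linarith

lemma P_one : P δ 1 = 1 := by
  unfold P
  rw [Finset.Icc_eq_empty (by omega), Finset.prod_empty]

lemma card_Icc (n : ℕ) : (Finset.Icc 2 (n+1)).card = n := by
  rw [Nat.card_Icc]; omega

lemma P_le_geom (h0 : 0 < δ) (h3 : δ < 1/3) (n : ℕ) : P δ (n+1) ≤ (1-δ)^n := by
  unfold P
  calc ∏ k ∈ Finset.Icc 2 (n+1), ((k : ℝ) / ((k : ℝ) + 1) - δ)
      ≤ ∏ _k ∈ Finset.Icc 2 (n+1), (1-δ) := by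
        apply Finset.prod_le_prod
        · intro k hk
          have hk2 : (2:ℕ) ≤ k := (Finset.mem_Icc.mp hk).1
          have hk2' : (2:ℝ) ≤ (k:ℝ) := by exact_mod_cast hk2
          have hpos : (0:ℝ) < (k:ℝ) + 1 := by linarith
          have : (2:ℝ)/3 ≤ (k:ℝ)/((k:ℝ)+1) := by
            rw [div_le_div_iff₀ (by norm_num) hpos]; linarith
          linarith
        · intro k hk
          have hpos : (0:ℝ) < (k:ℝ) + 1 := by positivity
          have : (k:ℝ)/((k:ℝ)+1) ≤ 1 := by
            rw [div_le_one hpos]; linarith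
          linarith
    _ = (1-δ)^n := by rw [Finset.prod_const, card_Icc]

lemma prod_ratio (n : ℕ) :
    ∏ k ∈ Finset.Icc 2 (n+1), ((k : ℝ) / ((k : ℝ) + 1)) = 2/((n:ℝ)+2) := by
  induction n with
  | zero =>
      rw [Finset.Icc_eq_empty (by omega), Finset.prod_empty]; norm_num
  | succ m ih =>
      rw [Finset.prod_Icc_succ_top (by omega), ih]
      push_cast
      have h1 : (m:ℝ) + 2 ≠ 0 := by positivity
      have h2 : (m:ℝ) + 1 + 1 + 1 ≠ 0 := by positivity
      field_simp
      ring

lemma P_le_two_div (h0 : 0 < δ) (h3 : δ < 1/3) (n : ℕ) : P δ (n+1) ≤ 2/((n:ℝ)+2) := by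
  unfold P
  rw [← prod_ratio n]
  apply Finset.prod_le_prod
  · intro k hk
    have hk2 : (2:ℕ) ≤ k := (Finset.mem_Icc.mp hk).1
    have hk2' : (2:ℝ) ≤ (k:ℝ) := by exact_mod_cast hk2
    have hpos : (0:ℝ) < (k:ℝ) + 1 := by linarith
    have : (2:ℝ)/3 ≤ (k:ℝ)/((k:ℝ)+1) := by
      rw [div_le_div_iff₀ (by norm_num) hpos]; linarith
    linarith
  · intro k _; linarith [h0]

lemma two_div_mul_le_P (h0 : 0 < δ) (h3 : δ < 1/3) (n : ℕ) :
    2/((n:ℝ)+2) * (1-2*δ)^n ≤ P δ (n+1) := by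
  have key : 2/((n:ℝ)+2) * (1-2*δ)^n
      = ∏ k ∈ Finset.Icc 2 (n+1), (((k : ℝ) / ((k : ℝ) + 1)) * (1-2*δ)) := by
    rw [Finset.prod_mul_distrib, prod_ratio, Finset.prod_const, card_Icc]
  rw [key]
  unfold P
  apply Finset.prod_le_prod
  · intro k hk
    have hk2 : (2:ℕ) ≤ k := (Finset.mem_Icc.mp hk).1
    have hk2' : (2:ℝ) ≤ (k:ℝ) := by exact_mod_cast hk2
    have hpos : (0:ℝ) < (k:ℝ) + 1 := by linarith
    have ht : (2:ℝ)/3 ≤ (k:ℝ)/((k:ℝ)+1) := by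
      rw [div_le_div_iff₀ (by norm_num) hpos]; linarith
    nlinarith
  · intro k hk
    have hk2 : (2:ℕ) ≤ k := (Finset.mem_Icc.mp hk).1
    have hk2' : (2:ℝ) ≤ (k:ℝ) := by exact_mod_cast hk2
    have hpos : (0:ℝ) < (k:ℝ) + 1 := by linarith
    have ht : (2:ℝ)/3 ≤ (k:ℝ)/((k:ℝ)+1) := by
      rw [div_le_div_iff₀ (by norm_num) hpos]; linarith
    have ht1 : (k:ℝ)/((k:ℝ)+1) ≤ 1 := by rw [div_le_one hpos]; linarith
    nlinarith

lemma p_telescope (n : ℕ) : p δ (n+1) = P δ (n+1) - P δ (n+2) := by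
  have hP : P δ (n+2) = P δ (n+1) * (((n:ℝ)+2)/((n:ℝ)+3) - δ) := by
    unfold P
    rw [show n + 2 = (n+1) + 1 from rfl, Finset.prod_Icc_succ_top (by omega)]
    congr 1
    push_cast
    ring
  rw [hP]
  unfold p
  have h3 : (n:ℝ) + 3 ≠ 0 := by positivity
  have : (1:ℝ) / ((n:ℝ)+1+2) + δ = 1 - (((n:ℝ)+2)/((n:ℝ)+3) - δ) := by
    field_simp
    ring
  push_cast
  rw [this]
  ring

lemma summable_P (h0 : 0 < δ) (h3 : δ < 1/3) : Summable (fun n => P δ (n+1)) := by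
  apply Summable.of_nonneg_of_le (fun n => (P_pos h0 h3 (n+1)).le) (P_le_geom h0 h3)
  exact summable_geometric_of_lt_one (by linarith) (by linarith)

lemma p_pos (h0 : 0 < δ) (h3 : δ < 1/3) (n : ℕ) : 0 < p δ n := by
  unfold p
  have h1 : (0:ℝ) < 1 / ((n:ℝ)+2) + δ := by positivity
  exact mul_pos (P_pos h0 h3 n) h1

lemma p_le_P (h0 : 0 < δ) (h3 : δ < 1/3) (n : ℕ) : p δ n ≤ P δ n := by
  unfold p
  have h1 : (1:ℝ) / ((n:ℝ)+2) + δ ≤ 1 := by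
    have : (1:ℝ) / ((n:ℝ)+2) ≤ 1/2 := by
      apply div_le_div_of_nonneg_left (by norm_num) (by norm_num)
      · have : (0:ℝ) ≤ (n:ℝ) := Nat.cast_nonneg n
        linarith
    linarith
  exact mul_le_of_le_one_right (P_pos h0 h3 n).le h1

lemma summable_p (h0 : 0 < δ) (h3 : δ < 1/3) : Summable (fun n => p δ (n+1)) := by
  apply Summable.of_nonneg_of_le (fun n => (p_pos h0 h3 (n+1)).le)
    (fun n => p_le_P h0 h3 (n+1)) (summable_P h0 h3)

lemma tendsto_P (h0 : 0 < δ) (h3 : δ < 1/3) :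
    Tendsto (fun n => P δ (n+1)) atTop (nhds 0) := by
  apply squeeze_zero (fun n => (P_pos h0 h3 (n+1)).le) (P_le_geom h0 h3)
  exact tendsto_pow_atTop_nhds_zero_of_lt_one (by linarith) (by linarith)

lemma tsum_p_eq_one (h0 : 0 < δ) (h3 : δ < 1/3) : ∑' n, p δ (n+1) = 1 := by
  have hs := (summable_p h0 h3).hasSum.tendsto_sum_nat
  have heq : ∀ n, ∑ i ∈ Finset.range n, p δ (i+1) = 1 - P δ (n+1) := by
    intro n
    have : ∑ i ∈ Finset.range n, p δ (i+1)
        = ∑ i ∈ Finset.range n, (P δ (i+1) - P δ (i+1+1)) :=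
      Finset.sum_congr rfl (fun i _ => p_telescope i)
    rw [this, Finset.sum_range_sub' (fun i => P δ (i+1)), P_one]
  have h2 : Tendsto (fun n => ∑ i ∈ Finset.range n, p δ (i+1)) atTop (nhds 1) := by
    simp only [heq]
    have := (tendsto_const_nhds (x := (1:ℝ)) (f := atTop)).sub (tendsto_P h0 h3)
    simpa using this
  exact tendsto_nhds_unique hs h2

lemma summable_odd (h0 : 0 < δ) (h3 : δ < 1/3) : Summable (fun n => p δ (2*n+1)) := by
  apply Summable.of_nonneg_of_le (f := fun n => (1-δ)^n)
    (fun n => (p_pos h0 h3 (2*n+1)).le)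
  · intro n
    calc p δ (2*n+1) ≤ P δ (2*n+1) := p_le_P h0 h3 _
      _ ≤ (1-δ)^(2*n) := P_le_geom h0 h3 (2*n)
      _ ≤ (1-δ)^n := pow_le_pow_of_le_one (by linarith) (by linarith) (by omega)
  · exact summable_geometric_of_lt_one (by linarith) (by linarith)

lemma summable_even (h0 : 0 < δ) (h3 : δ < 1/3) : Summable (fun n => p δ (2*n+2)) := by
  apply Summable.of_nonneg_of_le (f := fun n => (1-δ)^n)
    (fun n => (p_pos h0 h3 (2*n+2)).le)
  · intro n
    calc p δ (2*n+2) ≤ P δ (2*n+2) := p_le_P h0 h3 _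
      _ ≤ (1-δ)^(2*n+1) := P_le_geom h0 h3 (2*n+1)
      _ ≤ (1-δ)^n := pow_le_pow_of_le_one (by linarith) (by linarith) (by omega)
  · exact summable_geometric_of_lt_one (by linarith) (by linarith)

lemma odd_add_even (h0 : 0 < δ) (h3 : δ < 1/3) :
    (∑' n, p δ (2*n+1)) + (∑' n, p δ (2*n+2)) = 1 := by
  have := tsum_even_add_odd (f := fun n => p δ (n+1)) (summable_odd h0 h3)
    (by simpa [show ∀ k, 2*k+1+1 = 2*k+2 from fun k => by omega] using summable_even h0 h3)
  simp only [show ∀ k, 2*k+1+1 = 2*k+2 from fun k => by omega] at this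
  rw [this, tsum_p_eq_one h0 h3]

lemma P_two : P δ 2 = 2/3 - δ := by
  unfold P
  rw [show Finset.Icc 2 2 = {2} from rfl, Finset.prod_singleton]
  norm_num

lemma odd_ge (h0 : 0 < δ) (h3 : δ < 1/3) : 1/3 ≤ ∑' n, p δ (2*n+1) := by
  have h := Summable.le_tsum (summable_odd h0 h3) 0 (fun j _ => (p_pos h0 h3 (2*j+1)).le)
  have : p δ (2*0+1) = 1/3 + δ := by
    unfold p; rw [show 2*0+1 = 1 from rfl, P_one]; norm_num
  linarith [this ▸ h]

lemma even_ge (h0 : 0 < δ) (h3 : δ < 1/3) : 1/12 ≤ ∑' n, p δ (2*n+2) := by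
  have h := Summable.le_tsum (summable_even h0 h3) 0 (fun j _ => (p_pos h0 h3 (2*j+2)).le)
  have he : p δ (2*0+2) = (2/3 - δ) * (1/4 + δ) := by
    unfold p; rw [show 2*0+2 = 2 from rfl, P_two]; norm_num
  nlinarith [he ▸ h]

lemma odd_le (h0 : 0 < δ) (h3 : δ < 1/3) : ∑' n, p δ (2*n+1) ≤ 1 := by
  have h := odd_add_even h0 h3
  have : 0 ≤ ∑' n, p δ (2*n+2) := tsum_nonneg (fun n => (p_pos h0 h3 (2*n+2)).le)
  linarith

lemma even_le (h0 : 0 < δ) (h3 : δ < 1/3) : ∑' n, p δ (2*n+2) ≤ 1 := by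
  have h := odd_add_even h0 h3
  have : 0 ≤ ∑' n, p δ (2*n+1) := tsum_nonneg (fun n => (p_pos h0 h3 (2*n+1)).le)
  linarith

end SRRW

namespace SRRW
variable {δ : ℝ}

lemma sum_inv_le_log (N : ℕ) :
    ∑ n ∈ Finset.range N, (1:ℝ)/((n:ℝ)+2) ≤ Real.log ((N:ℝ)+1) := by
  induction N with
  | zero => simp
  | succ m ih =>
    rw [Finset.sum_range_succ]
    have hlog : 1/((m:ℝ)+2) ≤ Real.log ((m:ℝ)+2) - Real.log ((m:ℝ)+1) := by
      rw [← Real.log_div (by positivity) (by positivity)]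
      have h1 : Real.log (((m:ℝ)+1)/((m:ℝ)+2)) ≤ ((m:ℝ)+1)/((m:ℝ)+2) - 1 :=
        Real.log_le_sub_one_of_pos (by positivity)
      have h2 : Real.log (((m:ℝ)+2)/((m:ℝ)+1)) = - Real.log (((m:ℝ)+1)/((m:ℝ)+2)) := by
        rw [← Real.log_inv]
        congr 1
        rw [inv_div]
      have h3 : ((m:ℝ)+1)/((m:ℝ)+2) - 1 = -(1/((m:ℝ)+2)) := by
        field_simp
        norm_num
      rw [h2]
      linarith
    push_cast
    have he : (m:ℝ)+1+1 = (m:ℝ)+2 := by ring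
    rw [he]
    linarith

lemma log_le_sum_inv (N : ℕ) :
    Real.log ((N:ℝ)+2) - Real.log 2 ≤ ∑ n ∈ Finset.range N, (1:ℝ)/((n:ℝ)+2) := by
  induction N with
  | zero => norm_num
  | succ m ih =>
    rw [Finset.sum_range_succ]
    have hlog : Real.log ((m:ℝ)+3) - Real.log ((m:ℝ)+2) ≤ 1/((m:ℝ)+2) := by
      rw [← Real.log_div (by positivity) (by positivity)]
      have h1 : Real.log (((m:ℝ)+3)/((m:ℝ)+2)) ≤ ((m:ℝ)+3)/((m:ℝ)+2) - 1 :=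
        Real.log_le_sub_one_of_pos (by positivity)
      have h3 : ((m:ℝ)+3)/((m:ℝ)+2) - 1 = 1/((m:ℝ)+2) := by
        field_simp
        norm_num
      linarith
    push_cast
    have he : (m:ℝ)+1+2 = (m:ℝ)+3 := by ring
    rw [he]
    linarith

lemma hL_of (h0 : 0 < δ) (hδ : δ < Real.exp (-10)) : 10 < Real.log (1/δ) := by
  rw [one_div, Real.log_inv]
  have := Real.log_lt_log h0 hδ
  rw [Real.log_exp] at this
  linarith

lemma h3_of (h0 : 0 < δ) (hδ : δ < Real.exp (-10)) : δ < 1/3 := by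
  have h11 : (11:ℝ) ≤ Real.exp 10 := by
    have := Real.add_one_le_exp (10:ℝ)
    linarith
  have : Real.exp (-10) < 1/3 := by
    rw [Real.exp_neg]
    rw [inv_lt_comm₀ (by positivity) (by norm_num)]
    linarith
  linarith

lemma E_lower (h0 : 0 < δ) (hδ : δ < Real.exp (-10)) :
    Real.log (1/δ) / 2 ≤ ∑' n, P δ (n+1) := by
  have h3 : δ < 1/3 := h3_of h0 hδ
  have hL : 10 < Real.log (1/δ) := hL_of h0 hδ
  set L := Real.log (1/δ) with hLdef
  set N := ⌊1/(4*δ)⌋₊ with hN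
  -- termwise lower bound on head
  have hterm : ∀ n ∈ Finset.range N, (1:ℝ)/((n:ℝ)+2) ≤ P δ (n+1) := by
    intro n hn
    have hnN : n < N := Finset.mem_range.mp hn
    have hnn : ((n:ℝ)+1) ≤ (N:ℝ) := by exact_mod_cast hnN
    have hfl : (N:ℝ) ≤ 1/(4*δ) := Nat.floor_le (by positivity)
    have hn4 : (n:ℝ) ≤ 1/(4*δ) := by linarith
    have h2dn : 2*δ*(n:ℝ) ≤ 1/2 := by
      have := mul_le_mul_of_nonneg_left hn4 (by positivity : (0:ℝ) ≤ 2*δ)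
      have h4 : 2*δ*(1/(4*δ)) = 1/2 := by field_simp; ring
      linarith [h4 ▸ this]
    have hbern : 1 - 2*δ*(n:ℝ) ≤ (1-2*δ)^n := by
      have := one_add_mul_le_pow (a := -(2*δ)) (by linarith) n
      have he1 : (1:ℝ) + (n:ℝ)*(-(2*δ)) = 1 - 2*δ*(n:ℝ) := by ring
      have he2 : (1:ℝ) + -(2*δ) = 1 - 2*δ := by ring
      rw [he1, he2] at this
      exact this
    have hhalf : (1:ℝ)/2 ≤ (1-2*δ)^n := by linarith
    have := two_div_mul_le_P h0 h3 n
    have hfrac : (0:ℝ) < 2/((n:ℝ)+2) := by positivity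
    have hmul := mul_le_mul_of_nonneg_left hhalf hfrac.le
    have heq : 2/((n:ℝ)+2) * (1/2) = 1/((n:ℝ)+2) := by ring
    linarith [heq ▸ hmul]
  have hsplit := Summable.sum_add_tsum_nat_add (f := fun n => P δ (n+1)) N (summable_P h0 h3)
  have htail : 0 ≤ ∑' i, P δ (i + N + 1) :=
    tsum_nonneg (fun i => (P_pos h0 h3 (i + N + 1)).le)
  have hhead : ∑ n ∈ Finset.range N, (1:ℝ)/((n:ℝ)+2)
      ≤ ∑ n ∈ Finset.range N, P δ (n+1) := Finset.sum_le_sum hterm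
  have hsum : Real.log ((N:ℝ)+2) - Real.log 2 ≤ ∑ n ∈ Finset.range N, (1:ℝ)/((n:ℝ)+2) :=
    log_le_sum_inv N
  -- log (N+2) ≥ log (1/(4δ)) ≥ L - log 4
  have hNval : 1/(4*δ) < (N:ℝ) + 1 := Nat.lt_floor_add_one _
  have hlogN : Real.log (1/(4*δ)) ≤ Real.log ((N:ℝ)+2) := by
    apply Real.log_le_log (by positivity)
    linarith
  have hlog4 : Real.log (1/(4*δ)) = L - Real.log 4 := by
    rw [hLdef, one_div, one_div, mul_inv, Real.log_mul (by norm_num) (by positivity),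
      Real.log_inv, Real.log_inv]
    ring
  have hlog4' : Real.log 4 ≤ 3 := by
    have := Real.log_le_sub_one_of_pos (by norm_num : (0:ℝ) < 4)
    linarith
  have hlog2 : Real.log 2 ≤ 1 := by
    have := Real.log_le_sub_one_of_pos (by norm_num : (0:ℝ) < 2)
    linarith
  have : L - 4 ≤ ∑ n ∈ Finset.range N, P δ (n+1) := by
    have := hlog4 ▸ hlogN
    linarith
  linarith [hsplit, htail, this]

lemma E_upper (h0 : 0 < δ) (hδ : δ < Real.exp (-10)) :
    ∑' n, P δ (n+1) ≤ 7 * Real.log (1/δ) := by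
  have h3 : δ < 1/3 := h3_of h0 hδ
  have hL : 10 < Real.log (1/δ) := hL_of h0 hδ
  set L := Real.log (1/δ) with hLdef
  set N := ⌈L/δ⌉₊ with hN
  have hδinv : (0:ℝ) < 1/δ := by positivity
  -- head bound
  have hhead : ∑ n ∈ Finset.range N, P δ (n+1) ≤ 2 * Real.log ((N:ℝ)+1) := by
    have h1 : ∑ n ∈ Finset.range N, P δ (n+1)
        ≤ ∑ n ∈ Finset.range N, 2/((n:ℝ)+2) :=
      Finset.sum_le_sum (fun n _ => P_le_two_div h0 h3 n)
    have h2 : ∑ n ∈ Finset.range N, (2:ℝ)/((n:ℝ)+2)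
        = 2 * ∑ n ∈ Finset.range N, (1:ℝ)/((n:ℝ)+2) := by
      rw [Finset.mul_sum]
      apply Finset.sum_congr rfl
      intro n _
      ring
    have h4 := sum_inv_le_log N
    linarith [h2 ▸ h1]
  -- log (N+1) ≤ 3L
  have hLle : L ≤ 1/δ := by
    have := Real.log_le_sub_one_of_pos hδinv
    linarith
  have hNlt : (N:ℝ) < L/δ + 1 := Nat.ceil_lt_add_one (by positivity)
  have hinv3 : (3:ℝ) ≤ 1/δ := by
    rw [le_div_iff₀ h0]
    linarith
  have hN1 : (N:ℝ) + 1 ≤ (1/δ)^3 := by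
    have hLd : L/δ ≤ (1/δ)^2 := by
      rw [div_le_iff₀ h0]
      have : (1/δ)^2 * δ = 1/δ := by field_simp
      rw [this]
      exact hLle
    nlinarith
  have hlogN : Real.log ((N:ℝ)+1) ≤ 3 * L := by
    have h1 : Real.log ((N:ℝ)+1) ≤ Real.log ((1/δ)^3) := by
      apply Real.log_le_log (by positivity)
      exact hN1
    rw [Real.log_pow] at h1
    push_cast at h1
    linarith
  -- tail bound
  have hNge : L/δ ≤ (N:ℝ) := Nat.le_ceil _
  have hδN : L ≤ δ * (N:ℝ) := by
    rw [div_le_iff₀ h0] at hNge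
    linarith
  have hgeom : (1-δ)^N ≤ δ := by
    have hexp : 1 - δ ≤ Real.exp (-δ) := by
      have := Real.add_one_le_exp (-δ)
      linarith
    have h1 : (1-δ)^N ≤ Real.exp (-δ)^N :=
      pow_le_pow_left₀ (by linarith) hexp N
    have h2 : Real.exp (-δ)^N = Real.exp (-(δ * (N:ℝ))) := by
      rw [← Real.exp_nat_mul]
      congr 1
      ring
    have h3' : Real.exp (-(δ * (N:ℝ))) ≤ Real.exp (-L) :=
      Real.exp_le_exp.mpr (by linarith)
    have h4 : Real.exp (-L) = δ := by
      rw [hLdef, one_div, Real.log_inv, neg_neg, Real.exp_log h0]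
    calc (1-δ)^N ≤ Real.exp (-δ)^N := h1
      _ = Real.exp (-(δ * (N:ℝ))) := h2
      _ ≤ Real.exp (-L) := h3'
      _ = δ := h4
  have htail : ∑' i, P δ (i + N + 1) ≤ 1 := by
    have hsum1 : Summable (fun i : ℕ => (1-δ)^i * (1-δ)^N) :=
      (summable_geometric_of_lt_one (by linarith) (by linarith)).mul_right _
    have hle : ∀ i : ℕ, P δ (i + N + 1) ≤ (1-δ)^i * (1-δ)^N := by
      intro i
      have := P_le_geom h0 h3 (i + N)
      rw [pow_add] at this
      exact this
    have hsum2 : Summable (fun i : ℕ => P δ (i + N + 1)) := by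
      have := (summable_nat_add_iff (f := fun n => P δ (n+1)) N).2 (summable_P h0 h3)
      exact this
    have h1 : ∑' i, P δ (i + N + 1) ≤ ∑' i : ℕ, (1-δ)^i * (1-δ)^N :=
      Summable.tsum_le_tsum hle hsum2 hsum1
    have h2 : ∑' i : ℕ, (1-δ)^i * (1-δ)^N = (1-δ)^N * δ⁻¹ := by
      rw [tsum_mul_right, tsum_geometric_of_lt_one (by linarith) (by linarith)]
      have : (1:ℝ) - (1-δ) = δ := by ring
      rw [this]
      ring
    have h3' : (1-δ)^N * δ⁻¹ ≤ δ * δ⁻¹ :=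
      mul_le_mul_of_nonneg_right hgeom (by positivity)
    have h4 : δ * δ⁻¹ = 1 := mul_inv_cancel₀ (ne_of_gt h0)
    linarith [h1, h2 ▸ h1]
  have hsplit := Summable.sum_add_tsum_nat_add (f := fun n => P δ (n+1)) N (summable_P h0 h3)
  have : ∑' n, P δ (n+1) ≤ 2 * Real.log ((N:ℝ)+1) + 1 := by
    rw [← hsplit]
    exact add_le_add hhead htail
  linarith

end SRRW


/-- `ν(δ)` is of order `1/|log δ|`: there are constants `0 < c ≤ C` and
`δ₀ ∈ (0, 1/3)` with `c/log(1/δ) ≤ ν(δ) ≤ C/log(1/δ)` for all `δ ∈ (0, δ₀)`. -/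
theorem diffusivity_order_one_over_log :
    ∃ c C : ℝ, 0 < c ∧ c ≤ C ∧ ∃ δ₀ ∈ Set.Ioo (0 : ℝ) (1/3),
      ∀ δ ∈ Set.Ioo (0 : ℝ) δ₀,
        c / Real.log (1/δ) ≤ ν δ ∧ ν δ ≤ C / Real.log (1/δ) := by
  refine ⟨1/21, 24, by norm_num, by norm_num, Real.exp (-10), ⟨Real.exp_pos _, ?_⟩, ?_⟩
  · have h11 : (11:ℝ) ≤ Real.exp 10 := by
      have := Real.add_one_le_exp (10:ℝ)
      linarith
    rw [Real.exp_neg, inv_lt_comm₀ (by positivity) (by norm_num)]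
    linarith
  · intro δ hδm
    obtain ⟨h0, hδ⟩ := hδm
    have h3 : δ < 1/3 := SRRW.h3_of h0 hδ
    have hL : 10 < Real.log (1/δ) := SRRW.hL_of h0 hδ
    set L := Real.log (1/δ) with hLdef
    set A := ∑' n : ℕ, p δ (2*n+1) with hA
    set B := ∑' n : ℕ, p δ (2*n+2) with hB
    set E := ∑' n : ℕ, P δ (n+1) with hE
    have hA13 : 1/3 ≤ A := SRRW.odd_ge h0 h3
    have hA1 : A ≤ 1 := SRRW.odd_le h0 h3
    have hB12 : 1/12 ≤ B := SRRW.even_ge h0 h3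
    have hB1 : B ≤ 1 := SRRW.even_le h0 h3
    have hEL : L/2 ≤ E := SRRW.E_lower h0 hδ
    have hE7 : E ≤ 7*L := SRRW.E_upper h0 hδ
    have hLpos : (0:ℝ) < L := by linarith
    have hEpos : (0:ℝ) < E := by linarith
    have hBpos : (0:ℝ) < B := by linarith
    have hBE : (0:ℝ) < B * E := mul_pos hBpos hEpos
    have hν : ν δ = A / (B * E) := rfl
    rw [hν]
    constructor
    · rw [div_le_div_iff₀ hLpos hBE]
      have h1 : B * E ≤ 7*L := by nlinarith
      nlinarith
    · rw [div_le_div_iff₀ hBE hLpos]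
      have h2 : L/24 ≤ B * E := by nlinarith
      nlinarith
end

section
/- Let g(k) = ∫_1^∞ e^{−kx}·(x + log x)·x^{−(1+k)} dx for k > 0 (so that g(k) = −f′(k) for f(k) = ∫_1^∞ e^{−kx} x^{−(1+k)} dx). Then lim_{k→0⁺} k·g(k) = 1. -/
open Filter Set MeasureTheory

/-- `g(k) = ∫_1^∞ e^{-kx} (x + log x) x^{-(1+k)} dx = -f'(k)` for
`f(k) = ∫_1^∞ e^{-kx} x^{-(1+k)} dx`. -/
noncomputable def g (k : ℝ) : ℝ :=
  ∫ x in Set.Ioi (1 : ℝ), Real.exp (-k * x) * (x + Real.log x) * x ^ (-(1 + k))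

/-!
Substituting `u = k x` gives `k g(k) = ∫_{u > k} e^{-u} w_k(u / k) du` with
`w_k(t) = (t + log t) t^{-(1+k)} = t^{-k} + log t · t^{-(1+k)}`. For `t ≥ 1` this weight lies
between `1 - k log t` and `1 + log t / t`; at `t = u / k` we have `k log t = u · (log t / t)`,
so both bounds tend to `1` as `k → 0⁺` and the weight stays in `[0, 2]`. Dominated convergence
then gives `k g(k) → ∫_0^∞ e^{-u} du = 1`.
-/

open Real Topology

noncomputable def gWeight (k t : ℝ) : ℝ := (t + log t) * t ^ (-(1 + k))

section gWeight

variable {k t : ℝ}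

lemma gWeight_eq (ht : 0 < t) : gWeight k t = t ^ (-k) + log t * t ^ (-(1 + k)) := by
  have : t * t ^ (-(1 + k)) = t ^ (-k) := by
    rw [mul_comm, ← rpow_add_one ht.ne']
    ring_nf
  rw [gWeight, add_mul, this]

lemma gWeight_nonneg (ht : 1 ≤ t) : 0 ≤ gWeight k t :=
  mul_nonneg (by linarith [log_nonneg ht]) (rpow_nonneg (by linarith) _)

lemma one_sub_mul_log_le_gWeight (ht : 1 ≤ t) : 1 - k * log t ≤ gWeight k t := by
  have hpow : 1 - k * log t ≤ t ^ (-k) := by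
    rw [rpow_def_of_pos (by linarith)]
    linarith [add_one_le_exp (log t * -k)]
  have hlog : 0 ≤ log t * t ^ (-(1 + k)) :=
    mul_nonneg (log_nonneg ht) (rpow_nonneg (by linarith) _)
  rw [gWeight_eq (by linarith)]
  linarith

lemma gWeight_le_one_add_log_div (hk : 0 ≤ k) (ht : 1 ≤ t) : gWeight k t ≤ 1 + log t / t := by
  have hpow : t ^ (-k) ≤ 1 := rpow_le_one_of_one_le_of_nonpos ht (by linarith)
  have hlog : log t * t ^ (-(1 + k)) ≤ log t / t := by
    rw [div_eq_mul_inv, ← rpow_neg_one]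
    exact mul_le_mul_of_nonneg_left (rpow_le_rpow_of_exponent_le ht (by linarith)) (log_nonneg ht)
  rw [gWeight_eq (by linarith)]
  linarith

lemma gWeight_le_two (hk : 0 ≤ k) (ht : 1 ≤ t) : gWeight k t ≤ 2 := by
  have : log t / t ≤ 1 :=
    (div_le_one (by linarith)).2 (by linarith [log_le_sub_one_of_pos (by linarith : 0 < t)])
  linarith [gWeight_le_one_add_log_div hk ht]

lemma tendsto_gWeight_div {u : ℝ} (hu : 0 < u) :
    Tendsto (fun k => gWeight k (u / k)) (𝓝[>] 0) (𝓝 1) := by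
  have hsmall : ∀ᶠ k in 𝓝[>] 0, k ∈ Ioo 0 u := Ioo_mem_nhdsGT hu
  have hlog_div : Tendsto (fun k => log (u / k) / (u / k)) (𝓝[>] 0) (𝓝 0) :=
    isLittleO_log_id_atTop.tendsto_div_nhds_zero.comp
      (tendsto_inv_nhdsGT_zero.const_mul_atTop hu)
  have hlower : Tendsto (fun k => 1 - u * (log (u / k) / (u / k))) (𝓝[>] 0) (𝓝 1) := by
    simpa using (hlog_div.const_mul u).const_sub 1
  have hupper : Tendsto (fun k => 1 + log (u / k) / (u / k)) (𝓝[>] 0) (𝓝 1) := by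
    simpa using hlog_div.const_add 1
  refine tendsto_of_tendsto_of_tendsto_of_le_of_le' hlower hupper ?_ ?_
  all_goals
    filter_upwards [hsmall] with k hk
    have ht : 1 ≤ u / k := (one_le_div hk.1).2 hk.2.le
  · have hk_log : u * (log (u / k) / (u / k)) = k * log (u / k) := by
      field_simp
    rw [hk_log]
    exact one_sub_mul_log_le_gWeight ht
  · exact gWeight_le_one_add_log_div hk.1.le ht

end gWeight

noncomputable def gIntegrand (k : ℝ) : ℝ → ℝ :=
  (Ioi k).indicator fun u => exp (-u) * gWeight k (u / k)

section gIntegrand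

variable {k : ℝ}

lemma mul_g_eq_setIntegral_gIntegrand (hk : 0 < k) : k * g k = ∫ u in Ioi 0, gIntegrand k u := by
  have hsubst : g k = ∫ x in Ioi 1, (fun u => exp (-u) * gWeight k (u / k)) (k * x) := by
    refine setIntegral_congr_fun measurableSet_Ioi fun x _ => ?_
    simp only [gWeight, mul_div_cancel_left₀ _ hk.ne']
    ring_nf
  rw [hsubst, integral_comp_mul_left_Ioi (fun u => exp (-u) * gWeight k (u / k)) 1 hk, mul_one,
    smul_eq_mul, ← mul_assoc, mul_inv_cancel₀ hk.ne', one_mul, gIntegrand,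
    setIntegral_indicator measurableSet_Ioi, inter_eq_right.2 (Ioi_subset_Ioi hk.le)]

lemma measurable_gIntegrand (k : ℝ) : Measurable (gIntegrand k) :=
  Measurable.indicator (by unfold gWeight; fun_prop) measurableSet_Ioi

lemma norm_gIntegrand_le (hk : 0 < k) (u : ℝ) : ‖gIntegrand k u‖ ≤ 2 * exp (-u) := by
  by_cases hu : u ∈ Ioi k
  · have ht : 1 ≤ u / k := (one_le_div hk).2 (le_of_lt hu)
    rw [gIntegrand, indicator_of_mem hu, norm_of_nonneg
      (mul_nonneg (exp_pos _).le (gWeight_nonneg ht)), mul_comm]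
    exact mul_le_mul_of_nonneg_right (gWeight_le_two hk.le ht) (exp_pos _).le
  · simp [gIntegrand, indicator_of_notMem hu, (exp_pos _).le]

lemma tendsto_gIntegrand {u : ℝ} (hu : 0 < u) :
    Tendsto (gIntegrand · u) (𝓝[>] 0) (𝓝 (exp (-u))) := by
  have hprod := (tendsto_gWeight_div hu).const_mul (exp (-u))
  rw [mul_one] at hprod
  refine hprod.congr' ?_
  filter_upwards [Ioo_mem_nhdsGT hu] with k hk
  rw [gIntegrand, indicator_of_mem (mem_Ioi.2 hk.2)]

end gIntegrand

/-- `lim_{k→0⁺} k·g(k) = 1`, i.e. `f'(k) ∼ -1/k` as `k → 0⁺`. -/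
theorem k_mul_g_tendsto_one :
    Tendsto (fun k : ℝ => k * g k) (nhdsWithin 0 (Set.Ioi 0)) (nhds 1) := by
  have hbound : ∀ᶠ k in 𝓝[>] 0,
      ∀ᵐ u ∂volume.restrict (Ioi 0), ‖gIntegrand k u‖ ≤ 2 * exp (-u) :=
    eventually_mem_nhdsWithin.mono fun _ hk => .of_forall (norm_gIntegrand_le hk)
  have hlim : ∀ᵐ u ∂volume.restrict (Ioi 0),
      Tendsto (gIntegrand · u) (𝓝[>] 0) (𝓝 (exp (-u))) :=
    (ae_restrict_mem measurableSet_Ioi).mono fun _ hu => tendsto_gIntegrand hu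
  have hint : Integrable (fun u => 2 * exp (-u)) (volume.restrict (Ioi 0)) := by
    simpa using (exp_neg_integrableOn_Ioi 0 one_pos).const_mul 2
  have hdom := tendsto_integral_filter_of_dominated_convergence _
    (.of_forall fun k => (measurable_gIntegrand k).aestronglyMeasurable) hbound hint hlim
  rw [integral_exp_neg_Ioi_zero] at hdom
  exact hdom.congr' (eventually_mem_nhdsWithin.mono fun _ hk =>
    (mul_g_eq_setIntegral_gIntegrand hk).symm)
end

section
/- Let f(x) = 1/(x·(log x)²) for x ≥ e (and f(x) = 0 for 0 ≤ x < e), a probability density with infinite mean. Then for every constant c > 0, lim_{δ→0⁺} (log δ)² · δ·∫_e^{c/δ} x·f(x) dx = c. -/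
/-! On `[e, ∞)` the integrand `x f(x)` is `1 / (log x)²`, so the claim is the asymptotic
`∫_e^T dx / (log x)² ∼ T / (log T)²` read at `T = c / δ`, where `(log δ)² / (log T)² → 1`.
Integrating by parts, `∫_a^T dx / (log x)² = T / (log T)² - a / (log a)² + 2 ∫_a^T dx / (log x)³`,
and splitting the last integral at `√T`, where the decreasing integrand is already at most
`8 / (log T)³`, bounds it by `O(√T + T / (log T)³) = o(T / (log T)²)`. -/

open Filter Set MeasureTheory Real Topology intervalIntegral

lemma intervalIntegrable_one_div_log_pow {a b : ℝ} (ha : 1 < a) (hb : 1 < b) (k : ℕ) :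
    IntervalIntegrable (fun x => 1 / log x ^ k) volume a b := by
  refine ContinuousOn.intervalIntegrable fun x hx => ?_
  have hx : 1 < x := (lt_min ha hb).trans_le hx.1
  exact (continuousAt_const.div ((continuousAt_log (by positivity)).pow k)
    (pow_ne_zero _ (log_pos hx).ne')).continuousWithinAt

lemma hasDerivAt_div_log_sq {x : ℝ} (hx : 1 < x) :
    HasDerivAt (fun y => y / log y ^ 2) (1 / log x ^ 2 - 2 * (1 / log x ^ 3)) x := by
  have hlog : log x ≠ 0 := (log_pos hx).ne'
  refine ((hasDerivAt_id' x).div ((hasDerivAt_log (by positivity)).pow 2)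
    (pow_ne_zero 2 hlog)).congr_deriv ?_
  simp only [Pi.pow_apply]
  field_simp
  ring

lemma integral_one_div_log_sq {a b : ℝ} (ha : 1 < a) (hab : a ≤ b) :
    ∫ x in a..b, 1 / log x ^ 2 =
      b / log b ^ 2 - a / log a ^ 2 + 2 * ∫ x in a..b, 1 / log x ^ 3 := by
  have hb : 1 < b := ha.trans_le hab
  have h2 := intervalIntegrable_one_div_log_pow ha hb 2
  have h3 := (intervalIntegrable_one_div_log_pow ha hb 3).const_mul 2
  have hftc := integral_eq_sub_of_hasDerivAt
    (fun x hx => hasDerivAt_div_log_sq (ha.trans_le (by simpa [hab] using hx.1))) (h2.sub h3)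
  rw [integral_sub h2 h3, intervalIntegral.integral_const_mul] at hftc
  linarith

lemma integral_one_div_log_pow_le {a s b : ℝ} (ha : 1 < a) (has : a ≤ s) (hsb : s ≤ b)
    (k : ℕ) :
    ∫ x in a..b, 1 / log x ^ k ≤ (s - a) / log a ^ k + (b - s) / log s ^ k := by
  have hs : 1 < s := ha.trans_le has
  have hle {u v : ℝ} (hu : 1 < u) (huv : u ≤ v) :
      ∫ x in u..v, 1 / log x ^ k ≤ (v - u) / log u ^ k := by
    have := integral_mono_on huv (intervalIntegrable_one_div_log_pow hu (hu.trans_le huv) k)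
      intervalIntegrable_const fun x hx =>
        one_div_le_one_div_of_le (pow_pos (log_pos hu) k)
          (pow_le_pow_left₀ (log_nonneg hu.le) (log_le_log (by linarith) hx.1) k)
    simpa [div_eq_mul_inv] using this
  rw [← integral_add_adjacent_intervals (intervalIntegrable_one_div_log_pow ha hs k)
    (intervalIntegrable_one_div_log_pow hs (hs.trans_le hsb) k)]
  exact add_le_add (hle ha has) (hle hs hsb)

lemma tendsto_log_sq_div_atTop : Tendsto (fun T => log T ^ 2 / T) atTop (𝓝 0) := by
  simpa using tendsto_pow_log_div_mul_add_atTop 1 0 2 one_ne_zero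

lemma tendsto_log_sq_div_sqrt_atTop : Tendsto (fun T => log T ^ 2 / √T) atTop (𝓝 0) := by
  have := (tendsto_log_sq_div_atTop.comp tendsto_sqrt_atTop).const_mul 4
  rw [mul_zero] at this
  refine this.congr' ?_
  filter_upwards [eventually_ge_atTop 0] with T hT
  simp only [Function.comp_apply, log_sqrt hT]
  ring

lemma tendsto_log_sq_div_mul_integral_one_div_log_cube {a : ℝ} (ha : 1 < a) :
    Tendsto (fun T => log T ^ 2 / T * ∫ x in a..T, 1 / log x ^ 3) atTop (𝓝 0) := by
  have hbound := (tendsto_log_sq_div_sqrt_atTop.div_const (log a ^ 3)).add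
    ((tendsto_log_atTop.inv_tendsto_atTop).const_mul 8)
  rw [zero_div, mul_zero, add_zero] at hbound
  refine tendsto_of_tendsto_of_tendsto_of_le_of_le' tendsto_const_nhds hbound ?_ ?_
  · filter_upwards [eventually_ge_atTop a] with T hT
    refine mul_nonneg (div_nonneg (sq_nonneg _) (by linarith)) (integral_nonneg hT fun x hx => ?_)
    have := log_pos (ha.trans_le hx.1)
    positivity
  · filter_upwards [eventually_ge_atTop (a ^ 2)] with T hT
    have hT1 : 1 < T := by nlinarith
    have hlogT : 0 < log T := log_pos hT1
    have haT : a ≤ √T := le_sqrt_of_sq_le hT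
    have hsT : √T ≤ T := (sqrt_le_left (by linarith)).2 (by nlinarith)
    have hla : 0 < log a := log_pos ha
    have hJ := integral_one_div_log_pow_le ha haT hsT 3
    rw [log_sqrt (by linarith)] at hJ
    calc log T ^ 2 / T * ∫ x in a..T, 1 / log x ^ 3
        ≤ log T ^ 2 / T * ((√T - a) / log a ^ 3 + (T - √T) / (log T / 2) ^ 3) := by gcongr
      _ ≤ log T ^ 2 / T * (√T / log a ^ 3 + 8 * T / log T ^ 3) := by
        gcongr log T ^ 2 / T * (?_ + ?_)
        · gcongr; linarith
        · rw [div_pow, div_div_eq_mul_div, mul_comm]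
          gcongr
          norm_num
          linarith
      _ = log T ^ 2 / √T / log a ^ 3 + 8 * (log T)⁻¹ := by
        rw [show log T ^ 2 / T * (√T / log a ^ 3 + 8 * T / log T ^ 3)
            = log T ^ 2 * (√T / T) / log a ^ 3 + 8 * (T / T) * (log T ^ 2 / log T ^ 3) by ring,
          sqrt_div_self', div_self (by positivity)]
        field_simp

lemma tendsto_log_sq_div_mul_integral_one_div_log_sq {a : ℝ} (ha : 1 < a) :
    Tendsto (fun T => log T ^ 2 / T * ∫ x in a..T, 1 / log x ^ 2) atTop (𝓝 1) := by
  have hlim := ((tendsto_const_nhds (x := (1 : ℝ))).sub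
    (tendsto_log_sq_div_atTop.const_mul (a / log a ^ 2))).add
      ((tendsto_log_sq_div_mul_integral_one_div_log_cube ha).const_mul 2)
  rw [mul_zero, mul_zero, sub_zero, add_zero] at hlim
  refine hlim.congr' ?_
  filter_upwards [eventually_ge_atTop a] with T haT
  have hT : 0 < T := by linarith
  have hlogT : 0 < log T := log_pos (ha.trans_le haT)
  have hla : 0 < log a := log_pos ha
  rw [integral_one_div_log_sq ha haT]
  field_simp

/-- for the density `f(x) = 1/(x (log x)²)` on `[e,∞)` (infinite mean)
and any `c > 0`, `lim_{δ→0⁺} (log δ)² · δ·∫_e^{c/δ} x f(x) dx = c`. -/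
theorem log_squared_truncated_mean (c : ℝ) (hc : 0 < c) :
    Tendsto
      (fun δ : ℝ =>
        (Real.log δ) ^ 2 *
          (δ * ∫ x in Set.Ioc (Real.exp 1) (c / δ), x * (1 / (x * (Real.log x) ^ 2))))
      (nhdsWithin 0 (Set.Ioi 0)) (nhds c) := by
  have hinv : Tendsto (fun δ : ℝ => c / δ) (𝓝[>] 0) atTop := by
    simpa only [div_eq_mul_inv] using tendsto_inv_nhdsGT_zero.const_mul_atTop hc
  suffices h : Tendsto (fun T => log (c / T) ^ 2 * (c / T * ∫ x in exp 1..T, 1 / log x ^ 2))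
      atTop (𝓝 c) by
    refine (h.comp hinv).congr' ?_
    filter_upwards [self_mem_nhdsWithin, hinv.eventually_ge_atTop (exp 1)] with δ hδ hT
    have hintegrand (x : ℝ) : x * (1 / (x * log x ^ 2)) = 1 / log x ^ 2 := by
      rcases eq_or_ne x 0 with rfl | hx
      · simp
      · field_simp
    simp only [Function.comp_apply, div_div_cancel₀ hc.ne', hintegrand, integral_of_le hT]
  have hratio : Tendsto (fun T => (log c / log T - 1) ^ 2) atTop (𝓝 1) := by
    simpa [div_eq_mul_inv] using
      ((tendsto_log_atTop.inv_tendsto_atTop.const_mul (log c)).sub_const 1).pow 2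
  have hlim := (hratio.const_mul c).mul (tendsto_log_sq_div_mul_integral_one_div_log_sq
    (one_lt_exp_iff.2 one_pos))
  rw [mul_one, mul_one] at hlim
  refine hlim.congr' ?_
  filter_upwards [eventually_gt_atTop 1] with T hT
  have hlogT : 0 < log T := log_pos hT
  rw [log_div hc.ne' (by linarith)]
  field_simp
end
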